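/- For all n ≥ 1 and all k with 1 ≤ k ≤ n − 1, the unsigned Stirling numbers of the first kind satisfy the normalized matching inequality s(n, k−1) · (s(n, k) + n·s(n, k+1)) ≤ s(n, k) · (s(n, k−1) + n·s(n, k)); equivalently, s(n,k−1)/(s(n,k−1) + n·s(n,k)) ≤ s(n,k)/(s(n,k) + n·s(n,k+1)) whenever the denominators are positive. -/

import Mathlib

/-- The number of cycles of a permutation of `{1,…,n}` (here `Fin n`),
counting fixed points as cycles of length one. -/
def cycleCount {n : ℕ} (π : Equiv.Perm (Fin n)) : ℕ :=
  π.cycleType.card + (Finset.univ.filter fun x => π x = x).card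

/-- The unsigned Stirling number of the first kind `s(n,k)`: the number of
permutations of an `n`-element set with exactly `k` cycles (fixed points
counting as cycles of length one). -/
def stirlingFirst (n k : ℕ) : ℕ :=
  (Finset.univ.filter fun π : Equiv.Perm (Fin n) => cycleCount π = k).card

/-!
Write a permutation of `Fin (n + 1)` as `swap 0 p * π'` with `π'` fixing `0`
(`Equiv.Perm.decomposeFin`). For `p = 0` the point `0` is a new fixed point; for `p ≠ 0`
it is inserted into an existing cycle, since multiplying by `swap a (σ a)` cuts `a` out of its
cycle. Hence `s(n+1, k+1) = n s(n, k+1) + s(n, k)`, the recurrence defining `Nat.stirlingFirst`.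

The inequality is `n s(n,k-1) s(n,k+1) ≤ n s(n,k)²` in disguise. To push log-concavity through
the recurrence by induction on `n`, strengthen it to `s(n,i) s(n,j+1) ≤ s(n,i+1) s(n,j)` for all
`i ≤ j`.
-/

open Equiv Finset

namespace Equiv.Perm

variable {α β : Type*} [Fintype α] [DecidableEq α] [Fintype β] [DecidableEq β]

theorem card_parts_partition (σ : Perm α) :
    Multiset.card σ.partition.parts =
      Multiset.card σ.cycleType + (Fintype.card α - #σ.support) := by
  simp [parts_partition]

theorem IsCycle.card_cycleType_swap_mul_add_card_support {c : Perm α} (hc : c.IsCycle) {a : α}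
    (ha : c a ≠ a) :
    Multiset.card (swap a (c a) * c).cycleType + #c.support =
      Multiset.card c.cycleType + #(swap a (c a) * c).support + 1 := by
  by_cases hcca : c (c a) = a
  · have hc_eq := hc.eq_swap_of_apply_apply_eq_self ha hcca
    set b := c a
    rw [hc_eq, swap_mul_self, card_support_swap ha.symm, (isCycle_swap ha.symm).cycleType]
    simp
  · rw [(hc.swap_mul ha hcca).cycleType, hc.cycleType, support_swap_mul_eq c a hcca,
      card_sdiff_of_subset (singleton_subset_iff.mpr (mem_support.mpr ha))]
    have : 1 ≤ #c.support := card_pos.mpr ⟨a, mem_support.mpr ha⟩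
    simp only [Multiset.card_singleton, card_singleton]
    omega

theorem card_parts_partition_swap_mul {σ : Perm α} {a : α} (ha : σ a ≠ a) :
    Multiset.card (swap a (σ a) * σ).partition.parts = Multiset.card σ.partition.parts + 1 := by
  -- `σ = d * c` with `c` the cycle through `a`; the swap commutes with `d` and only cuts `c`.
  set c := σ.cycleOf a
  set d := σ * c⁻¹
  have hσ : σ = d * c := by simp [d]
  have hc : c.IsCycle := isCycle_cycleOf σ ha
  have hca : c a = σ a := cycleOf_apply_self σ a
  have hca_ne : c a ≠ a := hca ▸ ha
  have hdc : d.Disjoint c := disjoint_mul_inv_of_mem_cycleFactorsFinset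
    (cycleOf_mem_cycleFactorsFinset_iff.mpr (mem_support.mpr ha))
  clear_value c d
  have hτc : (swap a (c a) * c).support ⊆ c.support :=
    fun y hy => (mem_support_swap_mul_imp_mem_support_ne hy).1
  have hdτ : d.Disjoint (swap a (c a) * c) := hdc.mono le_rfl hτc
  have hda : d a = a := (hdc a).resolve_right hca_ne
  have hdca : d (c a) = c a := (hdc (c a)).resolve_right (c.injective.ne hca_ne)
  have hswap : swap a (σ a) * σ = d * (swap a (c a) * c) := by
    rw [← hca, hσ, ← mul_assoc, ← mul_assoc, mul_swap_eq_swap_mul, hda, hdca]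
  rw [hswap, hσ]
  simp only [card_parts_partition, hdc.cycleType_mul, hdτ.cycleType_mul, hdc.card_support_mul,
    hdτ.card_support_mul, Multiset.card_add]
  have hcard := hc.card_cycleType_swap_mul_add_card_support hca_ne
  have hle : #d.support + #c.support ≤ Fintype.card α := by
    rw [← card_union_of_disjoint (disjoint_iff_disjoint_support.mp hdc)]
    exact card_le_univ _
  have := card_le_card hτc
  omega

theorem card_parts_partition_extendDomain {p : β → Prop} [DecidablePred p] (f : α ≃ Subtype p)
    (g : Perm α) :
    Multiset.card (g.extendDomain f).partition.parts + Fintype.card α =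
      Multiset.card g.partition.parts + Fintype.card β := by
  have hαβ : Fintype.card α ≤ Fintype.card β :=
    (Fintype.card_congr f).trans_le (Fintype.card_subtype_le p)
  have := g.support.card_le_univ
  simp only [card_parts_partition, cycleType_extendDomain, card_support_extend_domain]
  omega

theorem decomposeFin_symm_zero {n : ℕ} (e : Perm (Fin n)) :
    decomposeFin.symm (0, e) = e.extendDomain (finSuccAboveEquiv 0) := by
  refine Equiv.ext fun x => ?_
  induction x using Fin.cases with
  | zero => simp [extendDomain_apply_not_subtype]
  | succ i =>
    have hi : (finSuccAboveEquiv 0).symm ⟨i.succ, Fin.succ_ne_zero i⟩ = i := by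
      rw [Equiv.symm_apply_eq]
      ext
      simp [finSuccAboveEquiv_apply]
    rw [decomposeFin_symm_apply_succ, swap_self, refl_apply,
      extendDomain_apply_subtype (b := i.succ) _ _ (Fin.succ_ne_zero i), hi]
    simp [finSuccAboveEquiv_apply]

theorem swap_mul_decomposeFin_symm {n : ℕ} (p : Fin (n + 1)) (e : Perm (Fin n)) :
    swap 0 p * decomposeFin.symm (p, e) = decomposeFin.symm (0, e) := by
  refine Equiv.ext fun x => ?_
  induction x using Fin.cases <;> simp

end Equiv.Perm

open Equiv.Perm

theorem cycleCount_eq_card_parts_partition {n : ℕ} (π : Perm (Fin n)) :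
    cycleCount π = Multiset.card π.partition.parts := by
  have : (univ.filter fun x => π x = x) = π.supportᶜ := by ext; simp
  rw [cycleCount, card_parts_partition, this, card_compl, Fintype.card_fin]

theorem cycleCount_pos {n : ℕ} (π : Perm (Fin (n + 1))) : 0 < cycleCount π := by
  rw [cycleCount_eq_card_parts_partition, Multiset.card_pos]
  intro h
  simpa [h] using π.partition.parts_sum

theorem cycleCount_decomposeFin_symm_zero {n : ℕ} (e : Perm (Fin n)) :
    cycleCount (decomposeFin.symm (0, e)) = cycleCount e + 1 := by
  have h := card_parts_partition_extendDomain (finSuccAboveEquiv 0) e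
  simp only [Fintype.card_fin] at h
  rw [cycleCount_eq_card_parts_partition, cycleCount_eq_card_parts_partition,
    decomposeFin_symm_zero]
  omega

theorem cycleCount_decomposeFin_symm {n : ℕ} (p : Fin (n + 1)) (e : Perm (Fin n)) :
    cycleCount (decomposeFin.symm (p, e)) = cycleCount e + if p = 0 then 1 else 0 := by
  split_ifs with hp
  · rw [hp, cycleCount_decomposeFin_symm_zero]
  · have h := card_parts_partition_swap_mul (σ := decomposeFin.symm (p, e)) (a := 0)
      (by simpa using hp)
    rw [decomposeFin_symm_apply_zero, swap_mul_decomposeFin_symm,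
      ← cycleCount_eq_card_parts_partition, ← cycleCount_eq_card_parts_partition,
      cycleCount_decomposeFin_symm_zero] at h
    omega

theorem stirlingFirst_succ_succ (n k : ℕ) :
    stirlingFirst (n + 1) (k + 1) = n * stirlingFirst n (k + 1) + stirlingFirst n k := by
  simp only [stirlingFirst, card_filter]
  rw [← decomposeFin.symm.sum_comp, Fintype.sum_prod_type, Fin.sum_univ_succ]
  simp [cycleCount_decomposeFin_symm, add_comm]

theorem stirlingFirst_eq_nat_stirlingFirst (n k : ℕ) :
    stirlingFirst n k = Nat.stirlingFirst n k := by
  induction n generalizing k with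
  | zero => cases k <;> simp [stirlingFirst, cycleCount, filter_eq']
  | succ n ih =>
    cases k with
    | zero => simp [stirlingFirst, (cycleCount_pos _).ne']
    | succ k => rw [stirlingFirst_succ_succ, Nat.stirlingFirst_succ_succ, ih, ih]

theorem Nat.stirlingFirst_mul_stirlingFirst_succ_le (n : ℕ) {i j : ℕ} (hij : i ≤ j) :
    Nat.stirlingFirst n i * Nat.stirlingFirst n (j + 1) ≤
      Nat.stirlingFirst n (i + 1) * Nat.stirlingFirst n j := by
  induction n generalizing i j with
  | zero => simp [Nat.stirlingFirst_eq_zero_of_lt (Nat.succ_pos j)]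
  | succ n ih =>
    obtain _ | i := i
    · simp
    obtain _ | j := j
    · omega
    have h₁ := ih (i := i) (j := j) (by omega)
    have h₂ := ih (i := i + 1) (j := j + 1) (by omega)
    have h₃ : Nat.stirlingFirst n i * Nat.stirlingFirst n (j + 2) ≤
        Nat.stirlingFirst n (i + 2) * Nat.stirlingFirst n j := by
      rcases (show i ≤ j by omega).eq_or_lt with rfl | hlt
      · rw [mul_comm]
      · exact (ih (i := i) (j := j + 1) (by omega)).trans (ih (i := i + 1) (j := j) hlt)
    simp only [Nat.stirlingFirst_succ_succ]
    -- compare the coefficients of `n * n`, `n` and `1`, using `h₂`, `h₃` and `h₁` respectively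
    nlinarith [Nat.mul_le_mul_left n h₃, Nat.mul_le_mul_left (n * n) h₂]

theorem stirlingFirst_normalized_matching_general (n k : ℕ) (hk : 1 ≤ k) :
    stirlingFirst n (k - 1) * (stirlingFirst n k + n * stirlingFirst n (k + 1)) ≤
      stirlingFirst n k * (stirlingFirst n (k - 1) + n * stirlingFirst n k) ∧
    (0 < stirlingFirst n (k - 1) + n * stirlingFirst n k →
      0 < stirlingFirst n k + n * stirlingFirst n (k + 1) →
      (stirlingFirst n (k - 1) : ℚ) /
          (stirlingFirst n (k - 1) + n * stirlingFirst n k) ≤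
        (stirlingFirst n k : ℚ) /
          (stirlingFirst n k + n * stirlingFirst n (k + 1))) := by
  have hlogconcave : stirlingFirst n (k - 1) * stirlingFirst n (k + 1) ≤
      stirlingFirst n k * stirlingFirst n k := by
    obtain ⟨j, rfl⟩ : ∃ j, k = j + 1 := ⟨k - 1, by omega⟩
    simp only [stirlingFirst_eq_nat_stirlingFirst, Nat.add_sub_cancel]
    exact Nat.stirlingFirst_mul_stirlingFirst_succ_le n (Nat.le_succ j)
  have hmatching :
      stirlingFirst n (k - 1) * (stirlingFirst n k + n * stirlingFirst n (k + 1)) ≤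
        stirlingFirst n k * (stirlingFirst n (k - 1) + n * stirlingFirst n k) := by
    nlinarith [Nat.mul_le_mul_left n hlogconcave]
  refine ⟨hmatching, fun hpos hpos' => ?_⟩
  rw [div_le_div_iff₀ (by exact_mod_cast hpos) (by exact_mod_cast hpos')]
  exact_mod_cast hmatching

/-- For `n ≥ 1` and `1 ≤ k ≤ n - 1`, the unsigned Stirling numbers of the
first kind satisfy the normalized matching inequality
`s(n,k-1)·(s(n,k) + n·s(n,k+1)) ≤ s(n,k)·(s(n,k-1) + n·s(n,k))`; equivalently,
`s(n,k-1)/(s(n,k-1) + n·s(n,k)) ≤ s(n,k)/(s(n,k) + n·s(n,k+1))` whenever the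
denominators are positive. -/
theorem stirlingFirst_normalized_matching (n k : ℕ) (hn : 1 ≤ n) (hk : 1 ≤ k)
    (hk' : k ≤ n - 1) :
    stirlingFirst n (k - 1) * (stirlingFirst n k + n * stirlingFirst n (k + 1)) ≤
      stirlingFirst n k * (stirlingFirst n (k - 1) + n * stirlingFirst n k) ∧
    (0 < stirlingFirst n (k - 1) + n * stirlingFirst n k →
      0 < stirlingFirst n k + n * stirlingFirst n (k + 1) →
      (stirlingFirst n (k - 1) : ℚ) /
          (stirlingFirst n (k - 1) + n * stirlingFirst n k) ≤
        (stirlingFirst n k : ℚ) /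
          (stirlingFirst n k + n * stirlingFirst n (k + 1))) :=
  stirlingFirst_normalized_matching_general n k hk
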